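/- arXiv:2605.30118 — 2 statements merged into one kernel-verified Lean document; each statement's English description precedes it below -/
import Mathlib

section
/- Let H be a real Hilbert space with continuous coercive symmetric bilinear form a (constants α, β), let M be a Hilbert space and Π : H → M a bounded linear map. Let Ṽ = range of the a-orthogonal projection onto the a-orthogonal complement of ker Π (i.e. Ṽ ⊥_a ker Π). Suppose u ∈ H solves a(u,v) = ⟨f, Πv⟩_M + ⟨g, v⟩_H for all v ∈ H, where f ∈ M and g ∈ H. If Ru ∈ Ṽ denotes the a-orthogonal projection of u, then α‖u - Ru‖_H ≤ ‖g‖_H. In particular the part of the right-hand side seen through Π contributes no error. -/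
open scoped RealInnerProductSpace

/-!
The error `e = u - Ru` lies in `ker P`, so testing the equation for `u` against `e` kills
the term `⟪f, P e⟫`, while `a Ru e = 0` by the `a`-orthogonality of `Ru` to `ker P`.
Hence `a e e = ⟪g, e⟫ ≤ ‖g‖ ‖e‖`, and coercivity gives `α ‖e‖ ≤ ‖g‖`.
-/

section

variable {E : Type*} [SeminormedAddCommGroup E] [Module ℝ E]

theorem LinearMap.mul_norm_le_of_coercive (a : E →ₗ[ℝ] E →ₗ[ℝ] ℝ) {α C : ℝ}
    (hcoer : ∀ u : E, α * ‖u‖ ^ 2 ≤ a u u) (hC : 0 ≤ C) {e : E} (he : a e e ≤ C * ‖e‖) :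
    α * ‖e‖ ≤ C := by
  rcases (norm_nonneg e).eq_or_lt with h0 | hpos
  · simpa [← h0] using hC
  · refine le_of_mul_le_mul_right ?_ hpos
    nlinarith [hcoer e]

end

theorem LinearMap.apply_sub_eq_inner_of_mem_ker
    {H M : Type*} [NormedAddCommGroup H] [InnerProductSpace ℝ H]
    [NormedAddCommGroup M] [InnerProductSpace ℝ M]
    (a : H →ₗ[ℝ] H →ₗ[ℝ] ℝ) (P : H →ₗ[ℝ] M) {f : M} {g u Ru : H}
    (hu : ∀ v : H, a u v = ⟪f, P v⟫ + ⟪g, v⟫) (horth : ∀ w ∈ LinearMap.ker P, a Ru w = 0)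
    {e : H} (he : e ∈ LinearMap.ker P) :
    a (u - Ru) e = ⟪g, e⟫ := by
  rw [LinearMap.mem_ker] at he
  rw [map_sub, LinearMap.sub_apply, hu e, horth e (LinearMap.mem_ker.2 he), he]
  simp

theorem stmt6_general
    {H M : Type*} [NormedAddCommGroup H] [InnerProductSpace ℝ H]
    [NormedAddCommGroup M] [InnerProductSpace ℝ M]
    (a : H →ₗ[ℝ] H →ₗ[ℝ] ℝ) (α : ℝ)
    (hcoer : ∀ u : H, α * ‖u‖ ^ 2 ≤ a u u)
    (P : H →L[ℝ] M)
    (f : M) (g : H)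
    (u : H) (hu : ∀ v : H, a u v = ⟪f, P v⟫ + ⟪g, v⟫)
    (Ru : H)
    (hker : u - Ru ∈ LinearMap.ker (P : H →ₗ[ℝ] M))
    (horth : ∀ w ∈ LinearMap.ker (P : H →ₗ[ℝ] M), a Ru w = 0) :
    α * ‖u - Ru‖ ≤ ‖g‖ := by
  have herr : a (u - Ru) (u - Ru) = ⟪g, u - Ru⟫ :=
    a.apply_sub_eq_inner_of_mem_ker (P : H →ₗ[ℝ] M) hu horth hker
  exact a.mul_norm_le_of_coercive hcoer (norm_nonneg g) (herr ▸ real_inner_le_norm g _)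

/-- If `u` solves `a u v = ⟪f, P v⟫ + ⟪g, v⟫` for all `v`, and `Ru` is
the `a`-orthogonal projection of `u` onto the `a`-orthogonal complement `Ṽ` of
`ker P` (so `u - Ru ∈ ker P` and `Ru ⊥_a ker P`), then `α ‖u - Ru‖ ≤ ‖g‖`:
the part of the right-hand side seen through `P` contributes no error. -/
theorem stmt6
    {H M : Type*} [NormedAddCommGroup H] [InnerProductSpace ℝ H] [CompleteSpace H]
    [NormedAddCommGroup M] [InnerProductSpace ℝ M] [CompleteSpace M]
    (a : H →ₗ[ℝ] H →ₗ[ℝ] ℝ) (α β : ℝ) (hα : 0 < α) (hαβ : α ≤ β)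
    (hsymm : ∀ u v : H, a u v = a v u)
    (hcont : ∀ u v : H, a u v ≤ β * ‖u‖ * ‖v‖)
    (hcoer : ∀ u : H, α * ‖u‖ ^ 2 ≤ a u u)
    (P : H →L[ℝ] M)
    (f : M) (g : H)
    (u : H) (hu : ∀ v : H, a u v = ⟪f, P v⟫ + ⟪g, v⟫)
    (Ru : H)
    (hker : u - Ru ∈ LinearMap.ker (P : H →ₗ[ℝ] M))
    (horth : ∀ w ∈ LinearMap.ker (P : H →ₗ[ℝ] M), a Ru w = 0) :
    α * ‖u - Ru‖ ≤ ‖g‖ :=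
  stmt6_general a α hcoer P f g u hu Ru hker horth
end

section
/- Let H be a Hilbert space, a a continuous coercive symmetric bilinear form with constants α, β, Π : H → M a bounded map into a Hilbert space M, W = ker Π closed. Assume the kernel approximation property: ‖ι w‖_{H₁} ≤ C_Π H ‖w‖_a for all w ∈ W, where ι : H → H₁ is a continuous embedding into a pivot Hilbert space H₁ and H > 0 a parameter. Let u ∈ H, and suppose ψ := u - Q ∈ W for some Q ∈ H, and that α‖ψ‖² ≤ (g₁, ι ψ)_{H₁} + a(r, ψ) where g₁ ∈ H₁ satisfies ‖g₁‖_{H₁} ≤ C₁ H^{k+1} and r ∈ H satisfies ‖r‖_a ≤ C₂ H^{m}. Then ‖ψ‖_a ≤ C (H^{k+1} · H/α + H^m) up to constants depending only on α, β, C_Π; i.e. ‖ψ‖_a ≲ H^{k+2} + H^m. -/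
/-!
Write `‖ψ‖_a = √(a ψ ψ)`. Continuity gives `(α/β) ‖ψ‖_a² ≤ α ‖ψ‖²`. In the hypothesis
`α ‖ψ‖² ≤ (g₁, ιψ) + a(r, ψ)`, Cauchy–Schwarz in `H₁` and the kernel approximation property bound
the pairing by `C_P H ‖g₁‖ ‖ψ‖_a`, while Cauchy–Schwarz for `a` bounds `a(r, ψ) ≤ ‖r‖_a ‖ψ‖_a`.
Dividing by `‖ψ‖_a` gives `‖ψ‖_a ≤ (β/α) (C_P H ‖g₁‖ + ‖r‖_a) ≲ H^{k+2} + H^m`.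
-/

open scoped RealInnerProductSpace

theorem le_div_of_mul_sq_le_mul {c K x : ℝ} (hc : 0 < c) (hK : 0 ≤ K) (h : c * x ^ 2 ≤ K * x) :
    x ≤ K / c := by
  rw [le_div_iff₀ hc]
  nlinarith [sq_nonneg x, sq_nonneg (x * c - K)]

theorem LinearMap.BilinForm.apply_le_sqrt_mul_sqrt_of_symm {E : Type*} [AddCommGroup E]
    [Module ℝ E] (B : LinearMap.BilinForm ℝ E) (hs : ∀ x, 0 ≤ B x x) (hB : LinearMap.IsSymm B)
    (x y : E) :
    B x y ≤ √(B x x) * √(B y y) := by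
  rw [← Real.sqrt_mul (hs x)]
  exact (le_abs_self _).trans (Real.abs_le_sqrt (B.apply_sq_le_of_symm hs hB x y))

theorem LinearMap.BilinForm.sqrt_apply_self_le_of_le_inner_add_apply
    {E F : Type*} [AddCommGroup E] [Norm E] [Module ℝ E]
    [NormedAddCommGroup F] [InnerProductSpace ℝ F]
    (a : LinearMap.BilinForm ℝ E) (hsymm : LinearMap.IsSymm a) (hpos : ∀ x, 0 ≤ a x x)
    {α β L : ℝ} (hα : 0 < α) (hβ : 0 < β) (hL : 0 ≤ L) {ψ r : E} {g v : F}
    (hbound : a ψ ψ ≤ β * ‖ψ‖ ^ 2) (hψ : α * ‖ψ‖ ^ 2 ≤ ⟪g, v⟫ + a r ψ)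
    (hv : ‖v‖ ≤ L * √(a ψ ψ)) :
    √(a ψ ψ) ≤ β / α * (L * ‖g‖ + √(a r r)) := by
  have hcs : a r ψ ≤ √(a r r) * √(a ψ ψ) := a.apply_le_sqrt_mul_sqrt_of_symm hpos hsymm r ψ
  have key : α / β * √(a ψ ψ) ^ 2 ≤ (L * ‖g‖ + √(a r r)) * √(a ψ ψ) :=
    calc α / β * √(a ψ ψ) ^ 2 = α / β * a ψ ψ := by rw [Real.sq_sqrt (hpos ψ)]
      _ ≤ α * ‖ψ‖ ^ 2 := by
        rw [div_mul_eq_mul_div, div_le_iff₀ hβ]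
        nlinarith [mul_le_mul_of_nonneg_left hbound hα.le]
      _ ≤ ‖g‖ * ‖v‖ + √(a r r) * √(a ψ ψ) := hψ.trans (add_le_add (real_inner_le_norm g v) hcs)
      _ ≤ ‖g‖ * (L * √(a ψ ψ)) + √(a r r) * √(a ψ ψ) := by gcongr
      _ = (L * ‖g‖ + √(a r r)) * √(a ψ ψ) := by ring
  exact (le_div_of_mul_sq_le_mul (by positivity) (by positivity) key).trans_eq
    (by rw [div_div_eq_mul_div]; ring)

theorem stmt13_general
    {H H₁ M : Type*} [NormedAddCommGroup H] [InnerProductSpace ℝ H]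
    [NormedAddCommGroup H₁] [InnerProductSpace ℝ H₁]
    [NormedAddCommGroup M] [InnerProductSpace ℝ M]
    (ι : H →L[ℝ] H₁)
    (a : H →ₗ[ℝ] H →ₗ[ℝ] ℝ) (α β : ℝ) (hα : 0 < α) (hαβ : α ≤ β)
    (hsymm : ∀ u v : H, a u v = a v u)
    (hcont : ∀ u v : H, a u v ≤ β * ‖u‖ * ‖v‖)
    (hcoer : ∀ u : H, α * ‖u‖ ^ 2 ≤ a u u)
    (P : H →L[ℝ] M)
    (C_P C₁ C₂ : ℝ) (hCP : 0 < C_P) (hC₁ : 0 < C₁) (hC₂ : 0 < C₂)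
    (k m : ℕ) :
    ∃ C : ℝ, 0 < C ∧
      ∀ Hh : ℝ, 0 < Hh →
        (∀ w ∈ LinearMap.ker (P : H →ₗ[ℝ] M), ‖ι w‖ ≤ C_P * Hh * Real.sqrt (a w w)) →
        ∀ u Q : H, ∀ g₁ : H₁, ∀ r : H,
          u - Q ∈ LinearMap.ker (P : H →ₗ[ℝ] M) →
          α * ‖u - Q‖ ^ 2 ≤ ⟪g₁, ι (u - Q)⟫ + a r (u - Q) →
          ‖g₁‖ ≤ C₁ * Hh ^ (k + 1) →
          Real.sqrt (a r r) ≤ C₂ * Hh ^ m →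
          Real.sqrt (a (u - Q) (u - Q)) ≤ C * (Hh ^ (k + 2) + Hh ^ m) := by
  have hβ : 0 < β := hα.trans_le hαβ
  refine ⟨β / α * (C_P * C₁ + C₂), by positivity, ?_⟩
  intro Hh hH hker u Q g₁ r hW hmain hg hr
  have hpos (x : H) : 0 ≤ a x x := by nlinarith [hcoer x, sq_nonneg ‖x‖]
  have hbound : a (u - Q) (u - Q) ≤ β * ‖u - Q‖ ^ 2 := by
    rw [sq, ← mul_assoc]; exact hcont _ _
  have hX : 0 ≤ Hh ^ (k + 2) := by positivity
  have hY : 0 ≤ Hh ^ m := by positivity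
  calc √(a (u - Q) (u - Q)) ≤ β / α * (C_P * Hh * ‖g₁‖ + √(a r r)) :=
        LinearMap.BilinForm.sqrt_apply_self_le_of_le_inner_add_apply a ⟨hsymm⟩ hpos hα hβ
          (by positivity) hbound hmain (hker _ hW)
    _ ≤ β / α * (C_P * Hh * (C₁ * Hh ^ (k + 1)) + C₂ * Hh ^ m) := by gcongr
    _ = β / α * (C_P * C₁ * Hh ^ (k + 2) + C₂ * Hh ^ m) := by ring
    _ ≤ β / α * ((C_P * C₁ + C₂) * (Hh ^ (k + 2) + Hh ^ m)) := by
        gcongr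
        nlinarith [mul_nonneg (mul_pos hCP hC₁).le hY, mul_nonneg hC₂.le hX]
    _ = β / α * (C_P * C₁ + C₂) * (Hh ^ (k + 2) + Hh ^ m) := by ring

/-- Abstract recursion step of the enriched error analysis: if
`ψ = u - Q ∈ W = ker P` satisfies `α‖ψ‖² ≤ (g₁, ιψ)_{H₁} + a(r, ψ)` with
`‖g₁‖ ≤ C₁ H^{k+1}` and `‖r‖_a ≤ C₂ H^m`, and `W` has the kernel approximation
property `‖ιw‖ ≤ C_P H ‖w‖_a`, then `‖ψ‖_a ≤ C (H^{k+2} + H^m)` with a constant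
depending only on the fixed data `α, β, C_P, C₁, C₂` (and not on `H, u, Q, g₁, r`). -/
theorem stmt13
    {H H₁ M : Type*} [NormedAddCommGroup H] [InnerProductSpace ℝ H] [CompleteSpace H]
    [NormedAddCommGroup H₁] [InnerProductSpace ℝ H₁] [CompleteSpace H₁]
    [NormedAddCommGroup M] [InnerProductSpace ℝ M] [CompleteSpace M]
    (ι : H →L[ℝ] H₁)
    (a : H →ₗ[ℝ] H →ₗ[ℝ] ℝ) (α β : ℝ) (hα : 0 < α) (hαβ : α ≤ β)
    (hsymm : ∀ u v : H, a u v = a v u)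
    (hcont : ∀ u v : H, a u v ≤ β * ‖u‖ * ‖v‖)
    (hcoer : ∀ u : H, α * ‖u‖ ^ 2 ≤ a u u)
    (P : H →L[ℝ] M)
    (C_P C₁ C₂ : ℝ) (hCP : 0 < C_P) (hC₁ : 0 < C₁) (hC₂ : 0 < C₂)
    (k m : ℕ) :
    ∃ C : ℝ, 0 < C ∧
      ∀ Hh : ℝ, 0 < Hh →
        (∀ w ∈ LinearMap.ker (P : H →ₗ[ℝ] M), ‖ι w‖ ≤ C_P * Hh * Real.sqrt (a w w)) →
        ∀ u Q : H, ∀ g₁ : H₁, ∀ r : H,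
          u - Q ∈ LinearMap.ker (P : H →ₗ[ℝ] M) →
          α * ‖u - Q‖ ^ 2 ≤ ⟪g₁, ι (u - Q)⟫ + a r (u - Q) →
          ‖g₁‖ ≤ C₁ * Hh ^ (k + 1) →
          Real.sqrt (a r r) ≤ C₂ * Hh ^ m →
          Real.sqrt (a (u - Q) (u - Q)) ≤ C * (Hh ^ (k + 2) + Hh ^ m) :=
  stmt13_general ι a α β hα hαβ hsymm hcont hcoer P C_P C₁ C₂ hCP hC₁ hC₂ k m
end
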